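/- arXiv:1212.1437 — 2 statements merged into one kernel-verified Lean document; each statement's English description precedes it below -/
import Mathlib

section
/- Hölder-in-time bound for the singular drift: let X₁,...,X_N : [0,T] → ℝ² be continuous paths, m_j ∈ [−A,A], and set U := A + (A/N)∑_{j≠1} ∫₀^T |X₁(u) − X_j(u)|^{−3/2} du (assumed finite). Then for all 0 ≤ s < t ≤ T, |(1/N)∫_s^t ∑_{j≠1} m_j K(X₁(u) − X_j(u)) du| ≤ U (t−s)^{1/3}, where K(x) = x^⊥/|x|². -/
open MeasureTheory

noncomputable section

abbrev E2 := EuclideanSpace ℝ (Fin 2)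

/-- The Biot–Savart kernel `K(x) = x^⊥/|x|²` on `ℝ²` (with the junk value `K(0) = 0`). -/
def biotSavart (x : E2) : E2 :=
  (‖x‖ ^ 2)⁻¹ •
    (EuclideanSpace.equiv (Fin 2) ℝ).symm
      ![-((EuclideanSpace.equiv (Fin 2) ℝ) x 1), (EuclideanSpace.equiv (Fin 2) ℝ) x 0]

/-!
Since `|K(x)| = |x|⁻¹`, everything rests on the pointwise splitting, for a time step `c > 0`,
`b⁻¹ ≤ c^{1/3} b^{-3/2} + c^{-2/3}` (if `b ≥ c^{2/3}` the second term dominates; otherwise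
`b^{1/2} ≤ c^{1/3}`). Integrated over `[s, t]` with `c = t - s`, it bounds the contribution of each
particle by `c^{1/3} (∫ₛᵗ |X₁ - Xⱼ|^{-3/2} + 1)`, the same bound that Hölder's inequality and
`a^{2/3} ≤ 1 + a` give.
-/

lemma norm_biotSavart (x : E2) : ‖biotSavart x‖ = ‖x‖⁻¹ := by
  have hperp : ‖(EuclideanSpace.equiv (Fin 2) ℝ).symm
      ![-((EuclideanSpace.equiv (Fin 2) ℝ) x 1), (EuclideanSpace.equiv (Fin 2) ℝ) x 0]‖ = ‖x‖ := by
    simp only [EuclideanSpace.norm_eq, Fin.sum_univ_two]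
    simp [add_comm]
  rw [biotSavart, norm_smul, hperp, norm_inv, norm_pow, norm_norm]
  rcases eq_or_ne ‖x‖ 0 with h | h
  · simp [h]
  · field_simp

lemma inv_le_rpow_mul_rpow_add_rpow {b c : ℝ} (hb : 0 ≤ b) (hc : 0 < c) :
    b⁻¹ ≤ c ^ (1/3 : ℝ) * b ^ (-(3/2) : ℝ) + c ^ (-(2/3) : ℝ) := by
  rcases hb.eq_or_lt with rfl | hb
  · simp only [inv_zero]
    positivity
  have hc23 : 0 < c ^ (2/3 : ℝ) := by positivity
  rcases le_or_gt (c ^ (2/3 : ℝ)) b with hbig | hsmall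
  · calc b⁻¹ ≤ (c ^ (2/3 : ℝ))⁻¹ := inv_anti₀ hc23 hbig
      _ = c ^ (-(2/3) : ℝ) := (Real.rpow_neg hc.le _).symm
      _ ≤ _ := le_add_of_nonneg_left (by positivity)
  · have hsqrt : b ^ (1/2 : ℝ) ≤ c ^ (1/3 : ℝ) := by
      calc b ^ (1/2 : ℝ) ≤ (c ^ (2/3 : ℝ)) ^ (1/2 : ℝ) := by gcongr
        _ = c ^ (1/3 : ℝ) := by rw [← Real.rpow_mul hc.le]; norm_num
    calc b⁻¹ = b ^ (1/2 : ℝ) * b ^ (-(3/2) : ℝ) := by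
          rw [← Real.rpow_add hb, ← Real.rpow_neg_one]; norm_num
      _ ≤ c ^ (1/3 : ℝ) * b ^ (-(3/2) : ℝ) := by gcongr
      _ ≤ _ := le_add_of_nonneg_right (by positivity)

lemma rpow_neg_two_thirds_mul_self {c : ℝ} (hc : 0 ≤ c) : c ^ (-(2/3) : ℝ) * c = c ^ (1/3 : ℝ) := by
  nth_rw 2 [← Real.rpow_one c]
  rw [← Real.rpow_add' hc (by norm_num)]
  norm_num

lemma norm_integral_sum_le_of_norm_le_inv {ι E : Type*} [NormedAddCommGroup E] [NormedSpace ℝ E]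
    (S : Finset ι) (F : ι → ℝ → E) (r : ι → ℝ → ℝ) {A s t : ℝ} (hA : 0 ≤ A) (hst : s ≤ t)
    (hr : ∀ i u, 0 ≤ r i u) (hF : ∀ i u, ‖F i u‖ ≤ A * (r i u)⁻¹)
    (hint : ∀ i ∈ S, IntervalIntegrable (fun u => r i u ^ (-(3/2) : ℝ)) volume s t) :
    ‖∫ u in s..t, ∑ i ∈ S, F i u‖ ≤
      A * ((∑ i ∈ S, ∫ u in s..t, r i u ^ (-(3/2) : ℝ)) + S.card) * (t - s) ^ (1/3 : ℝ) := by
  set c := t - s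
  let g (i : ι) (u : ℝ) : ℝ := A * (c ^ (1/3 : ℝ) * r i u ^ (-(3/2) : ℝ) + c ^ (-(2/3) : ℝ))
  have hg : ∀ i ∈ S, IntervalIntegrable (g i) volume s t := fun i hi =>
    (((hint i hi).const_mul _).add intervalIntegrable_const).const_mul A
  have hbound : ∀ u ∈ Set.Ioc s t, ‖∑ i ∈ S, F i u‖ ≤ ∑ i ∈ S, g i u := by
    intro u hu
    have hc : 0 < c := sub_pos.2 (hu.1.trans_le hu.2)
    refine (norm_sum_le _ _).trans (Finset.sum_le_sum fun i _ => (hF i u).trans ?_)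
    exact mul_le_mul_of_nonneg_left (inv_le_rpow_mul_rpow_add_rpow (hr i u) hc) hA
  have hintg : ∀ i ∈ S, ∫ u in s..t, g i u =
      A * c ^ (1/3 : ℝ) * (∫ u in s..t, r i u ^ (-(3/2) : ℝ)) + A * c ^ (1/3 : ℝ) := by
    intro i hi
    rw [intervalIntegral.integral_const_mul,
      intervalIntegral.integral_add ((hint i hi).const_mul _) intervalIntegrable_const,
      intervalIntegral.integral_const_mul, intervalIntegral.integral_const, smul_eq_mul,
      mul_comm (t - s), rpow_neg_two_thirds_mul_self (sub_nonneg.2 hst)]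
    ring
  -- no integrability of `F` is needed: a non-integrable integrand has integral `0`
  calc ‖∫ u in s..t, ∑ i ∈ S, F i u‖ ≤ ∫ u in s..t, ∑ i ∈ S, g i u :=
        intervalIntegral.norm_integral_le_of_norm_le hst (.of_forall hbound)
          (by simpa only [Finset.sum_fn] using IntervalIntegrable.sum S hg)
    _ = _ := by
        rw [intervalIntegral.integral_finsetSum hg, Finset.sum_congr rfl hintg,
          Finset.sum_add_distrib, ← Finset.mul_sum, Finset.sum_const, nsmul_eq_mul]
        ring

theorem stmt17_general (N : ℕ) (hN : 0 < N) (A T : ℝ)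
    (X : Fin N → ℝ → E2) (m : Fin N → ℝ)
    (hm : ∀ j, |m j| ≤ A)
    -- integrability of the singular quantities
    (hint32 : ∀ j, j ≠ ⟨0, hN⟩ →
      IntervalIntegrable (fun u => ‖X ⟨0, hN⟩ u - X j u‖ ^ (-(3/2) : ℝ)) volume 0 T) :
    ∀ s t : ℝ, 0 ≤ s → s ≤ t → t ≤ T →
      ‖(1 / (N : ℝ)) •
          ∫ u in s..t, ∑ j ∈ Finset.univ.erase ⟨0, hN⟩,
            m j • biotSavart (X ⟨0, hN⟩ u - X j u)‖ ≤
        (A + (A / (N : ℝ)) * ∑ j ∈ Finset.univ.erase ⟨0, hN⟩,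
            ∫ u in (0:ℝ)..T, ‖X ⟨0, hN⟩ u - X j u‖ ^ (-(3/2) : ℝ)) *
          (t - s) ^ ((1:ℝ)/3) := by
  intro s t hs hst htT
  set S := Finset.univ.erase (⟨0, hN⟩ : Fin N)
  have hA : 0 ≤ A := (abs_nonneg _).trans (hm ⟨0, hN⟩)
  have hsub : Set.uIcc s t ⊆ Set.uIcc 0 T := by
    rw [Set.uIcc_of_le hst, Set.uIcc_of_le (hs.trans (hst.trans htT))]
    exact Set.Icc_subset_Icc hs htT
  have hdrift := norm_integral_sum_le_of_norm_le_inv S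
    (fun j u => m j • biotSavart (X ⟨0, hN⟩ u - X j u)) (fun j u => ‖X ⟨0, hN⟩ u - X j u‖)
    hA hst (fun _ _ => norm_nonneg _)
    (fun j u => by
      rw [norm_smul, norm_biotSavart, Real.norm_eq_abs]
      exact mul_le_mul_of_nonneg_right (hm j) (by positivity))
    (fun j hj => (hint32 j (Finset.ne_of_mem_erase hj)).mono_set hsub)
  have hmono : ∑ j ∈ S, ∫ u in s..t, ‖X ⟨0, hN⟩ u - X j u‖ ^ (-(3/2) : ℝ) ≤
      ∑ j ∈ S, ∫ u in (0:ℝ)..T, ‖X ⟨0, hN⟩ u - X j u‖ ^ (-(3/2) : ℝ) :=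
    Finset.sum_le_sum fun j hj => intervalIntegral.integral_mono_interval hs hst htT
      (.of_forall fun _ => by positivity) (hint32 j (Finset.ne_of_mem_erase hj))
  have hcard : (S.card : ℝ) ≤ N := by
    exact_mod_cast (Finset.card_le_univ S).trans_eq (Fintype.card_fin N)
  have hN' : (0 : ℝ) < N := by exact_mod_cast hN
  rw [norm_smul, Real.norm_eq_abs, abs_of_pos (by positivity)]
  calc 1 / (N : ℝ) * ‖∫ u in s..t, ∑ j ∈ S, m j • biotSavart (X ⟨0, hN⟩ u - X j u)‖
      ≤ 1 / N * (A * ((∑ j ∈ S, ∫ u in s..t, ‖X ⟨0, hN⟩ u - X j u‖ ^ (-(3/2) : ℝ)) + S.card) *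
          (t - s) ^ (1/3 : ℝ)) := by gcongr
    _ ≤ 1 / N * (A * ((∑ j ∈ S, ∫ u in (0:ℝ)..T, ‖X ⟨0, hN⟩ u - X j u‖ ^ (-(3/2) : ℝ)) + N) *
          (t - s) ^ (1/3 : ℝ)) := by gcongr
    _ = _ := by field_simp; ring

/-- Hölder-in-time bound for the singular drift: for continuous paths `X_j`, circulations
`|m_j| ≤ A`, and `U := A + (A/N)∑_{j≠1}∫₀^T |X₁(u)−X_j(u)|^{−3/2} du`, one has for all
`0 ≤ s < t ≤ T`: `|(1/N)∫_s^t ∑_{j≠1} m_j K(X₁(u)−X_j(u)) du| ≤ U (t−s)^{1/3}`. -/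
theorem stmt17 (N : ℕ) (hN2 : 2 ≤ N) (hN : 0 < N) (A T : ℝ) (hA : 0 < A) (hT : 0 < T)
    (X : Fin N → ℝ → E2) (m : Fin N → ℝ)
    (hm : ∀ j, |m j| ≤ A)
    (hcont : ∀ j, Continuous (X j))
    -- the paths are a.e. distinct from the first one
    (hdist : ∀ j, j ≠ ⟨0, hN⟩ → ∀ᵐ u : ℝ, X ⟨0, hN⟩ u ≠ X j u)
    -- integrability of the singular quantities
    (hint32 : ∀ j, j ≠ ⟨0, hN⟩ →
      IntervalIntegrable (fun u => ‖X ⟨0, hN⟩ u - X j u‖ ^ (-(3/2) : ℝ)) volume 0 T)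
    (hintK : ∀ j, j ≠ ⟨0, hN⟩ →
      IntervalIntegrable (fun u => biotSavart (X ⟨0, hN⟩ u - X j u)) volume 0 T) :
    ∀ s t : ℝ, 0 ≤ s → s ≤ t → t ≤ T →
      ‖(1 / (N : ℝ)) •
          ∫ u in s..t, ∑ j ∈ Finset.univ.erase ⟨0, hN⟩,
            m j • biotSavart (X ⟨0, hN⟩ u - X j u)‖ ≤
        (A + (A / (N : ℝ)) * ∑ j ∈ Finset.univ.erase ⟨0, hN⟩,
            ∫ u in (0:ℝ)..T, ‖X ⟨0, hN⟩ u - X j u‖ ^ (-(3/2) : ℝ)) *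
          (t - s) ^ ((1:ℝ)/3) :=
  stmt17_general N hN A T X m hm hint32
end
end

section
/- Extraction of an L¹ a.e.-convergent subsequence from entropy convergence: if F^N, F are probability densities on a measure space μ such that (1/2)H(F^N) + (1/2)H(F) − H((F^N + F)/2) → 0 as N → ∞ (with H(f) = ∫ f log f dμ), then F^N → F in measure along a subsequence; together with uniform integrability (e.g. a uniform bound on ∫ F^N(⟨x⟩^k + log F^N) dμ giving Dunford–Pettis weak L¹ compactness), this yields F^N → F strongly in L¹(μ). -/
/-!
Write `ψ(a, b)` for the defect of convexity of `x log x` at the midpoint of `a, b ≥ 0`.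
The elementary bound `t log (t / m) - t + m ≥ (√t - √m)²` (from `log y ≥ 1 - 1 / y`), applied
with `m = (a + b) / 2` to `t = a` and `t = b`, gives `(√a - √b)² ≤ 4 ψ(a, b)`; multiplying by
`(√a + √b)² ≤ 2 (a + b)` yields `(a - b)² ≤ 8 (a + b) ψ(a, b)`, and by AM-GM
`|a - b| ≤ c (a + b) + (2 / c) ψ(a, b)` for every `c > 0`. Integrating against the two
probability densities, `‖F^N - F‖₁ ≤ 2c + (2 / c) D_N` where `D_N → 0` is the entropy defect,
so `F^N → F` in `L¹`, and therefore in measure.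
-/

open MeasureTheory Filter Topology Real

noncomputable def entropyGap (a b : ℝ) : ℝ :=
  (a * log a + b * log b) / 2 - (a + b) / 2 * log ((a + b) / 2)

lemma entropyGap_nonneg {a b : ℝ} (ha : 0 ≤ a) (hb : 0 ≤ b) : 0 ≤ entropyGap a b := by
  have h := convexOn_mul_log.2 (Set.mem_Ici.2 ha) (Set.mem_Ici.2 hb)
    (by norm_num : (0 : ℝ) ≤ 1 / 2) (by norm_num : (0 : ℝ) ≤ 1 / 2) (by norm_num)
  simp only [smul_eq_mul] at h
  rw [show 1 / 2 * a + 1 / 2 * b = (a + b) / 2 by ring] at h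
  rw [entropyGap]
  linarith

lemma sq_sqrt_sub_sqrt_le_mul_log_sub {t m : ℝ} (ht : 0 ≤ t) (hm : 0 < m) :
    (√t - √m) ^ 2 ≤ t * log t - t * log m - (t - m) := by
  rcases ht.eq_or_lt with rfl | ht
  · simp [Real.sq_sqrt hm.le]
  have hst : 0 < √t := Real.sqrt_pos.2 ht
  have hsm : 0 < √m := Real.sqrt_pos.2 hm
  have hlog := one_sub_inv_le_log_of_pos (div_pos hst hsm)
  rw [inv_div, log_div hst.ne' hsm.ne', log_sqrt ht.le, log_sqrt hm.le] at hlog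
  have ht2 : √t ^ 2 = t := Real.sq_sqrt ht.le
  have hm2 : √m ^ 2 = m := Real.sq_sqrt hm.le
  have key : 2 * (t - √t * √m) ≤ t * log t - t * log m := by
    have := mul_le_mul_of_nonneg_left hlog (by positivity : (0 : ℝ) ≤ 2 * t)
    have e : 2 * t * (1 - √m / √t) = 2 * (t - √t * √m) := by
      field_simp
      linear_combination √m * ht2
    linarith
  have hexpand : (√t - √m) ^ 2 = t - 2 * (√t * √m) + m := by linear_combination ht2 + hm2
  linarith

lemma sq_sub_le_eight_mul_entropyGap {a b : ℝ} (ha : 0 ≤ a) (hb : 0 ≤ b) :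
    (a - b) ^ 2 ≤ 8 * (a + b) * entropyGap a b := by
  rcases (add_nonneg ha hb).eq_or_lt with hab | hab
  · obtain ⟨rfl, rfl⟩ : a = 0 ∧ b = 0 := ⟨by linarith, by linarith⟩
    simp
  set m := (a + b) / 2
  have hm : 0 < m := by positivity
  have hellinger : (√a - √m) ^ 2 + (√b - √m) ^ 2 ≤ 2 * entropyGap a b := by
    have h := add_le_add (sq_sqrt_sub_sqrt_le_mul_log_sub ha hm)
      (sq_sqrt_sub_sqrt_le_mul_log_sub hb hm)
    have hsum : a + b = 2 * m := by simp only [m]; ring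
    have e : a * log m + b * log m = 2 * (m * log m) := by rw [← add_mul, hsum]; ring
    change _ ≤ 2 * ((a * log a + b * log b) / 2 - m * log m)
    linarith
  have ha2 : √a ^ 2 = a := Real.sq_sqrt ha
  have hb2 : √b ^ 2 = b := Real.sq_sqrt hb
  have hminus : (√a - √b) ^ 2 ≤ 4 * entropyGap a b := by
    nlinarith [sq_nonneg (√a + √b - 2 * √m)]
  have hplus : (√a + √b) ^ 2 ≤ 2 * (a + b) := by
    nlinarith [sq_nonneg (√a - √b)]
  calc (a - b) ^ 2 = (√a - √b) ^ 2 * (√a + √b) ^ 2 := by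
        linear_combination (-(√a ^ 2 - √b ^ 2 + (a - b))) * (ha2 - hb2)
    _ ≤ 4 * entropyGap a b * (2 * (a + b)) :=
      mul_le_mul hminus hplus (sq_nonneg _) (by linarith [sq_nonneg (√a - √b)])
    _ = 8 * (a + b) * entropyGap a b := by ring

lemma abs_sub_le_entropyGap {a b c : ℝ} (ha : 0 ≤ a) (hb : 0 ≤ b) (hc : 0 < c) :
    |a - b| ≤ c * (a + b) + 2 / c * entropyGap a b := by
  have hgap := entropyGap_nonneg ha hb
  refine abs_le_of_sq_le_sq ?_ (by positivity)
  calc (a - b) ^ 2 ≤ 8 * (a + b) * entropyGap a b := sq_sub_le_eight_mul_entropyGap ha hb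
    _ = 4 * (c * (a + b)) * (2 / c * entropyGap a b) := by field_simp; ring
    _ ≤ (c * (a + b) + 2 / c * entropyGap a b) ^ 2 := four_mul_le_sq_add _ _

section Integral

variable {α : Type*} [MeasurableSpace α] {μ : Measure α}

lemma integrable_entropyGap {f g : α → ℝ} (hf : Integrable (fun x => f x * log (f x)) μ)
    (hg : Integrable (fun x => g x * log (g x)) μ)
    (hfg : Integrable (fun x => (f x + g x) / 2 * log ((f x + g x) / 2)) μ) :
    Integrable (fun x => entropyGap (f x) (g x)) μ :=
  ((hf.add hg).div_const 2).sub hfg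

lemma integral_entropyGap {f g : α → ℝ} (hf : Integrable (fun x => f x * log (f x)) μ)
    (hg : Integrable (fun x => g x * log (g x)) μ)
    (hfg : Integrable (fun x => (f x + g x) / 2 * log ((f x + g x) / 2)) μ) :
    ∫ x, entropyGap (f x) (g x) ∂μ = 1 / 2 * (∫ x, f x * log (f x) ∂μ) +
      1 / 2 * (∫ x, g x * log (g x) ∂μ) - ∫ x, (f x + g x) / 2 * log ((f x + g x) / 2) ∂μ := by
  have hmean : Integrable (fun x => (f x * log (f x) + g x * log (g x)) / 2) μ :=
    (hf.add hg).div_const 2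
  simp only [entropyGap]
  rw [integral_sub hmean hfg, integral_div, integral_add hf hg]
  ring

lemma integral_abs_sub_le_entropyGap {f g : α → ℝ} (hf0 : ∀ x, 0 ≤ f x) (hg0 : ∀ x, 0 ≤ g x)
    (hf : Integrable f μ) (hg : Integrable g μ)
    (hgap : Integrable (fun x => entropyGap (f x) (g x)) μ) {c : ℝ} (hc : 0 < c) :
    ∫ x, |f x - g x| ∂μ ≤
      c * (∫ x, f x ∂μ + ∫ x, g x ∂μ) + 2 / c * ∫ x, entropyGap (f x) (g x) ∂μ := by
  have hmass : Integrable (fun x => c * (f x + g x)) μ := (hf.add hg).const_mul c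
  have hgap_mul : Integrable (fun x => 2 / c * entropyGap (f x) (g x)) μ := hgap.const_mul _
  calc ∫ x, |f x - g x| ∂μ
      ≤ ∫ x, c * (f x + g x) + 2 / c * entropyGap (f x) (g x) ∂μ :=
        integral_mono (hf.sub hg).abs (hmass.add hgap_mul) fun x =>
          abs_sub_le_entropyGap (hf0 x) (hg0 x) hc
    _ = c * (∫ x, f x ∂μ + ∫ x, g x ∂μ) + 2 / c * ∫ x, entropyGap (f x) (g x) ∂μ := by
        rw [integral_add hmass hgap_mul, integral_const_mul,
          integral_const_mul, integral_add hf hg]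

lemma tendsto_integral_abs_sub_of_tendsto_integral_entropyGap {ι : Type*} {l : Filter ι}
    {F : ι → α → ℝ} {G : α → ℝ} (hF0 : ∀ n x, 0 ≤ F n x) (hG0 : ∀ x, 0 ≤ G x)
    (hF : ∀ n, Integrable (F n) μ) (hG : Integrable G μ)
    (hF1 : ∀ n, ∫ x, F n x ∂μ = 1) (hG1 : ∫ x, G x ∂μ = 1)
    (hgap : ∀ n, Integrable (fun x => entropyGap (F n x) (G x)) μ)
    (hlim : Tendsto (fun n => ∫ x, entropyGap (F n x) (G x) ∂μ) l (𝓝 0)) :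
    Tendsto (fun n => ∫ x, |F n x - G x| ∂μ) l (𝓝 0) := by
  refine tendsto_order.2 ⟨fun a ha => Eventually.of_forall fun n =>
    ha.trans_le (integral_nonneg fun x => abs_nonneg _), fun ε hε => ?_⟩
  have hc : 0 < ε / 4 := by positivity
  have hsmall : Tendsto (fun n => 2 / (ε / 4) * ∫ x, entropyGap (F n x) (G x) ∂μ) l (𝓝 0) := by
    simpa using hlim.const_mul (2 / (ε / 4))
  filter_upwards [hsmall.eventually (gt_mem_nhds (half_pos hε))] with n hn
  have := integral_abs_sub_le_entropyGap (hF0 n) hG0 (hF n) hG (hgap n) hc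
  rw [hF1 n, hG1] at this
  linarith

lemma tendstoInMeasure_of_tendsto_integral_abs_sub {ι : Type*} {l : Filter ι}
    {F : ι → α → ℝ} {G : α → ℝ} (hF : ∀ n, Integrable (F n) μ) (hG : Integrable G μ)
    (hlim : Tendsto (fun n => ∫ x, |F n x - G x| ∂μ) l (𝓝 0)) :
    TendstoInMeasure μ F l G := by
  refine tendstoInMeasure_of_tendsto_eLpNorm one_ne_zero (fun n => (hF n).aestronglyMeasurable)
    hG.aestronglyMeasurable ?_
  have heq : ∀ n, eLpNorm (F n - G) 1 μ = ENNReal.ofReal (∫ x, |F n x - G x| ∂μ) := fun n => by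
    rw [eLpNorm_one_eq_lintegral_enorm,
      ← ofReal_integral_norm_eq_lintegral_enorm ((hF n).sub hG)]
    rfl
  simpa only [heq, ENNReal.ofReal_zero, Function.comp_def] using
    (ENNReal.continuous_ofReal.tendsto 0).comp hlim

end Integral

theorem stmt19_general {α : Type*} [MeasurableSpace α] (μ : Measure α)
    (F : ℕ → α → ℝ) (G : α → ℝ)
    (hF0 : ∀ n x, 0 ≤ F n x) (hG0 : ∀ x, 0 ≤ G x)
    (hFint : ∀ n, Integrable (F n) μ) (hGint : Integrable G μ)
    (hF1 : ∀ n, (∫ x, F n x ∂μ) = 1) (hG1 : (∫ x, G x ∂μ) = 1)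
    (hHF : ∀ n, Integrable (fun x => F n x * Real.log (F n x)) μ)
    (hHG : Integrable (fun x => G x * Real.log (G x)) μ)
    (hHmix : ∀ n, Integrable
      (fun x => ((F n x + G x) / 2) * Real.log ((F n x + G x) / 2)) μ)
    -- the entropy convexity defect vanishes
    (hdefect : Tendsto
      (fun n => (1/2) * (∫ x, F n x * Real.log (F n x) ∂μ) +
        (1/2) * (∫ x, G x * Real.log (G x) ∂μ) -
        ∫ x, ((F n x + G x) / 2) * Real.log ((F n x + G x) / 2) ∂μ)
      atTop (𝓝 0)) :
    (∃ φ : ℕ → ℕ, StrictMono φ ∧ TendstoInMeasure μ (fun n => F (φ n)) atTop G) ∧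
      Tendsto (fun n => ∫ x, |F n x - G x| ∂μ) atTop (𝓝 0) := by
  have hL1 : Tendsto (fun n => ∫ x, |F n x - G x| ∂μ) atTop (𝓝 0) :=
    tendsto_integral_abs_sub_of_tendsto_integral_entropyGap hF0 hG0 hFint hGint hF1 hG1
      (fun n => integrable_entropyGap (hHF n) hHG (hHmix n))
      (by simpa only [integral_entropyGap (hHF _) hHG (hHmix _)] using hdefect)
  exact ⟨⟨id, strictMono_id, tendstoInMeasure_of_tendsto_integral_abs_sub hFint hGint hL1⟩, hL1⟩

/-- Extraction of strong `L¹` convergence from convergence of the entropy convexity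
defect: if `F^N`, `F` are probability densities with
`(1/2)H(F^N) + (1/2)H(F) − H((F^N+F)/2) → 0` (with `H(f) = ∫ f log f dμ`), then along a
subsequence `F^N → F` in measure, and, with uniform integrability (Dunford–Pettis),
`F^N → F` strongly in `L¹(μ)`. -/
theorem stmt19 {α : Type*} [MeasurableSpace α] (μ : Measure α) [SigmaFinite μ]
    (F : ℕ → α → ℝ) (G : α → ℝ)
    (hF0 : ∀ n x, 0 ≤ F n x) (hG0 : ∀ x, 0 ≤ G x)
    (hFmeas : ∀ n, Measurable (F n)) (hGmeas : Measurable G)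
    (hFint : ∀ n, Integrable (F n) μ) (hGint : Integrable G μ)
    (hF1 : ∀ n, (∫ x, F n x ∂μ) = 1) (hG1 : (∫ x, G x ∂μ) = 1)
    (hHF : ∀ n, Integrable (fun x => F n x * Real.log (F n x)) μ)
    (hHG : Integrable (fun x => G x * Real.log (G x)) μ)
    (hHmix : ∀ n, Integrable
      (fun x => ((F n x + G x) / 2) * Real.log ((F n x + G x) / 2)) μ)
    -- the entropy convexity defect vanishes
    (hdefect : Tendsto
      (fun n => (1/2) * (∫ x, F n x * Real.log (F n x) ∂μ) +
        (1/2) * (∫ x, G x * Real.log (G x) ∂μ) -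
        ∫ x, ((F n x + G x) / 2) * Real.log ((F n x + G x) / 2) ∂μ)
      atTop (𝓝 0))
    -- uniform integrability (Dunford–Pettis weak `L¹` compactness)
    (hui : UnifIntegrable F 1 μ) :
    (∃ φ : ℕ → ℕ, StrictMono φ ∧ TendstoInMeasure μ (fun n => F (φ n)) atTop G) ∧
      Tendsto (fun n => ∫ x, |F n x - G x| ∂μ) atTop (𝓝 0) :=
  stmt19_general μ F G hF0 hG0 hFint hGint hF1 hG1 hHF hHG hHmix hdefect
end
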